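/- arXiv:2304.02141 — 2 statements merged into one kernel-verified Lean document; each statement's English description precedes it below -/
import Mathlib

section
/- Let N ≥ 1, let z_1,…,z_N be real numbers, let Q_0 ≤ Q_1 be reals, and let q be a feasible unimodal sequence with peak index p (q nondecreasing on {1,…,p}, nonincreasing on {p,…,N}). Fix an index n with p < n < N. If z_n < 0, then the sequence q' obtained from q by setting q'_n = q_{n-1} (and q'_j = q_j for j ≠ n) is feasible, unimodal with the same peak p, and satisfies ∑_j z_j q'_j ≤ ∑_j z_j q_j. Likewise, if z_n > 0, then the sequence q'' obtained by setting q''_n = q_{n+1} is feasible, unimodal with peak p, and satisfies ∑_j z_j q''_j ≤ ∑_j z_j q_j. -/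
/-! Changing only `q_n` changes the loss by `z_n (v - q_n)`, so moving `q_n` up to `q_{n-1}`
(when `z_n < 0`) or down to `q_{n+1}` (when `z_n > 0`) cannot increase it. On the
nonincreasing side of the peak both values lie between the neighbours `q_{n+1} ≤ q_n ≤ q_{n-1}`,
so the updated sequence is still nonincreasing there, and nothing changes left of the peak. -/

/-- `q` is feasible: each coordinate with index in `{1,…,N}` lies in `[Q0, Q1]`. -/
def Feasible (Q0 Q1 : ℝ) (N : ℕ) (q : ℕ → ℝ) : Prop :=
  ∀ n, 1 ≤ n → n ≤ N → Q0 ≤ q n ∧ q n ≤ Q1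

/-- `q` is nondecreasing on indices `{a,…,b}`. -/
def NondecOn (q : ℕ → ℝ) (a b : ℕ) : Prop :=
  ∀ i j, a ≤ i → i ≤ j → j ≤ b → q i ≤ q j

/-- `q` is nonincreasing on indices `{a,…,b}`. -/
def NonincOn (q : ℕ → ℝ) (a b : ℕ) : Prop :=
  ∀ i j, a ≤ i → i ≤ j → j ≤ b → q j ≤ q i

/-- Linear loss `∑_{n=1}^N z_n q_n`. -/
noncomputable def linLoss (z q : ℕ → ℝ) (N : ℕ) : ℝ :=
  ∑ n ∈ Finset.Icc 1 N, z n * q n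

theorem linLoss_update {z q : ℕ → ℝ} {N n : ℕ} (hn : n ∈ Finset.Icc 1 N) (v : ℝ) :
    linLoss z (Function.update q n v) N = linLoss z q N + z n * (v - q n) := by
  have hdiff : linLoss z (Function.update q n v) N - linLoss z q N = z n * (v - q n) := by
    rw [linLoss, linLoss, ← Finset.sum_sub_distrib, Finset.sum_eq_single_of_mem n hn]
    · rw [Function.update_self, mul_sub]
    · intro j _ hjn
      rw [Function.update_of_ne hjn, sub_self]
  linarith

theorem Feasible.update {Q0 Q1 : ℝ} {N : ℕ} {q : ℕ → ℝ} (hq : Feasible Q0 Q1 N q) (n : ℕ)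
    {v : ℝ} (hv : Q0 ≤ v ∧ v ≤ Q1) : Feasible Q0 Q1 N (Function.update q n v) := by
  intro m hm1 hmN
  rcases eq_or_ne m n with rfl | hmn
  · rwa [Function.update_self]
  · rw [Function.update_of_ne hmn]
    exact hq m hm1 hmN

theorem NondecOn.update_of_lt {q : ℕ → ℝ} {a b n : ℕ} (hq : NondecOn q a b) (hbn : b < n)
    (v : ℝ) : NondecOn (Function.update q n v) a b := by
  intro i j hai hij hjb
  rw [Function.update_of_ne (by omega), Function.update_of_ne (by omega)]
  exact hq i j hai hij hjb

theorem NonincOn.update_of_between {q : ℕ → ℝ} {a b n : ℕ} (hq : NonincOn q a b)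
    (han : a < n) (hnb : n < b) {v : ℝ} (hnext : q (n + 1) ≤ v) (hprev : v ≤ q (n - 1)) :
    NonincOn (Function.update q n v) a b := by
  intro i j hai hij hjb
  rcases eq_or_ne i n with rfl | hin <;> rcases eq_or_ne j i with rfl | hji
  · exact le_rfl
  · rw [Function.update_self, Function.update_of_ne hji]
    exact (hq (i + 1) j (by omega) (by omega) hjb).trans hnext
  · exact le_rfl
  rw [Function.update_of_ne hin]
  rcases eq_or_ne j n with rfl | hjn
  · rw [Function.update_self]
    exact hprev.trans (hq i (j - 1) hai (by omega) (by omega))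
  · rw [Function.update_of_ne hjn]
    exact hq i j hai hij hjb

theorem stmt3_general (N p n : ℕ) (z q : ℕ → ℝ) (Q0 Q1 : ℝ)
    (hp1 : 1 ≤ p)
    (hfeas : Feasible Q0 Q1 N q)
    (hup : NondecOn q 1 p) (hdown : NonincOn q p N)
    (hpn : p < n) (hnN : n < N) :
    (z n < 0 →
      Feasible Q0 Q1 N (Function.update q n (q (n - 1))) ∧
      NondecOn (Function.update q n (q (n - 1))) 1 p ∧
      NonincOn (Function.update q n (q (n - 1))) p N ∧
      linLoss z (Function.update q n (q (n - 1))) N ≤ linLoss z q N) ∧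
    (0 < z n →
      Feasible Q0 Q1 N (Function.update q n (q (n + 1))) ∧
      NondecOn (Function.update q n (q (n + 1))) 1 p ∧
      NonincOn (Function.update q n (q (n + 1))) p N ∧
      linLoss z (Function.update q n (q (n + 1))) N ≤ linLoss z q N) := by
  have hn : n ∈ Finset.Icc 1 N := Finset.mem_Icc.2 ⟨by omega, hnN.le⟩
  have hnext : q (n + 1) ≤ q n := hdown n (n + 1) hpn.le (by omega) (by omega)
  have hprev : q n ≤ q (n - 1) := hdown (n - 1) n (by omega) (by omega) hnN.le
  refine ⟨fun hz => ⟨?_, ?_, ?_, ?_⟩, fun hz => ⟨?_, ?_, ?_, ?_⟩⟩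
  · exact hfeas.update n (hfeas (n - 1) (by omega) (by omega))
  · exact hup.update_of_lt hpn _
  · exact hdown.update_of_between hpn hnN (hnext.trans hprev) le_rfl
  · rw [linLoss_update hn]
    exact add_le_of_nonpos_right (mul_nonpos_of_nonpos_of_nonneg hz.le (sub_nonneg.2 hprev))
  · exact hfeas.update n (hfeas (n + 1) (by omega) (by omega))
  · exact hup.update_of_lt hpn _
  · exact hdown.update_of_between hpn hnN le_rfl (hnext.trans hprev)
  · rw [linLoss_update hn]
    exact add_le_of_nonpos_right (mul_nonpos_of_nonneg_of_nonpos hz.le (sub_nonpos.2 hnext))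

/-- for a feasible sequence, unimodal with peak `p`, and an index `n` with
`p < n < N`: if `z_n < 0`, replacing `q_n` by `q_{n-1}` keeps feasibility and unimodality
with the same peak and does not increase the linear loss; if `z_n > 0`, the same holds
for replacing `q_n` by `q_{n+1}`. -/
theorem stmt3 (N p n : ℕ) (z q : ℕ → ℝ) (Q0 Q1 : ℝ) (hQ : Q0 ≤ Q1)
    (hN : 1 ≤ N) (hp1 : 1 ≤ p)
    (hfeas : Feasible Q0 Q1 N q)
    (hup : NondecOn q 1 p) (hdown : NonincOn q p N)
    (hpn : p < n) (hnN : n < N) :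
    (z n < 0 →
      Feasible Q0 Q1 N (Function.update q n (q (n - 1))) ∧
      NondecOn (Function.update q n (q (n - 1))) 1 p ∧
      NonincOn (Function.update q n (q (n - 1))) p N ∧
      linLoss z (Function.update q n (q (n - 1))) N ≤ linLoss z q N) ∧
    (0 < z n →
      Feasible Q0 Q1 N (Function.update q n (q (n + 1))) ∧
      NondecOn (Function.update q n (q (n + 1))) 1 p ∧
      NonincOn (Function.update q n (q (n + 1))) p N ∧
      linLoss z (Function.update q n (q (n + 1))) N ≤ linLoss z q N) :=
  stmt3_general N p n z q Q0 Q1 hp1 hfeas hup hdown hpn hnN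
end

section
/- Let N ≥ 1, let z_1,…,z_N be real numbers, and let Q_0 ≤ Q_1 be reals. Then there exist indices 0 ≤ τ_1 ≤ τ_2 ≤ N such that the rectangular sequence r with r_n = Q_0 for n ≤ τ_1, r_n = Q_1 for τ_1 < n ≤ τ_2, and r_n = Q_0 for n > τ_2 is feasible, unimodal, and minimizes the linear loss ∑_{n=1}^N z_n q_n over all feasible unimodal sequences q. -/
/-- `q` is unimodal on `{1,…,N}`. -/
def UnimodalOn (N : ℕ) (q : ℕ → ℝ) : Prop :=
  ∃ p, 1 ≤ p ∧ p ≤ N ∧ NondecOn q 1 p ∧ NonincOn q p N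

/-- The rectangular sequence: `Q0` for `n ≤ τ1`, `Q1` for `τ1 < n ≤ τ2`, `Q0` for `n > τ2`. -/
def rectSeq (Q0 Q1 : ℝ) (τ1 τ2 : ℕ) : ℕ → ℝ :=
  fun n => if n ≤ τ1 then Q0 else if n ≤ τ2 then Q1 else Q0

/-!
Let `m ≤ 0` be the least sum of `z` over a subinterval `(τ1, τ2]` of `(0, N]`; the rectangular
sequence for `τ1, τ2` has loss `Q0 ∑ z + (Q1 - Q0) m`. Conversely, every unimodal `q` with values
in `[L, U]` on an interval has loss at least `L ∑ z + (U - L) m`: by unimodality the smaller of the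
two endpoint values `c` bounds `q` from below on the whole interval, so peeling off that endpoint
and inducting with lower bound `c` costs nothing, since `(c - L) (∑ z - m) ≥ 0`.
-/

open Finset

theorem NondecOn.mono {q : ℕ → ℝ} {a b a' b' : ℕ} (hq : NondecOn q a b) (ha : a ≤ a')
    (hb : b' ≤ b) : NondecOn q a' b' :=
  fun i j hi hij hj => hq i j (ha.trans hi) hij (hj.trans hb)

theorem NonincOn.mono {q : ℕ → ℝ} {a b a' b' : ℕ} (hq : NonincOn q a b) (ha : a ≤ a')
    (hb : b' ≤ b) : NonincOn q a' b' :=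
  fun i j hi hij hj => hq i j (ha.trans hi) hij (hj.trans hb)

-- The peak `p` is not required to lie in `(a, b]`, so the hypotheses pass to subintervals.
theorem add_mul_le_sum_Ioc_mul_of_unimodal {z q : ℕ → ℝ} {m L U : ℝ} {a b p : ℕ}
    (hm : ∀ u v, Ioc u v ⊆ Ioc a b → m ≤ ∑ n ∈ Ioc u v, z n) (hLU : L ≤ U)
    (hq : ∀ n ∈ Ioc a b, L ≤ q n ∧ q n ≤ U)
    (hinc : NondecOn q (a + 1) p) (hdec : NonincOn q p b) :
    L * ∑ n ∈ Ioc a b, z n + (U - L) * m ≤ ∑ n ∈ Ioc a b, z n * q n := by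
  obtain ⟨k, hk⟩ : ∃ k, b - a = k := ⟨_, rfl⟩
  induction k generalizing a b L with
  | zero =>
    have hm0 : m ≤ 0 := by simpa using hm 0 0 (by simp)
    rw [Ioc_eq_empty (by omega)]
    simpa using mul_nonpos_of_nonneg_of_nonpos (sub_nonneg.2 hLU) hm0
  | succ k ih =>
    set c := min (q (a + 1)) (q b)
    have hc : ∀ n ∈ Ioc a b, c ≤ q n := by
      intro n hn
      rw [mem_Ioc] at hn
      rcases le_total n p with hnp | hpn
      · exact (min_le_left _ _).trans (hinc _ _ le_rfl (by omega) hnp)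
      · exact (min_le_right _ _).trans (hdec _ _ hpn hn.2 le_rfl)
    have hLc : L ≤ c := le_min (hq _ (by simp; omega)).1 (hq _ (by simp; omega)).1
    have hcU : c ≤ U := (min_le_right _ _).trans (hq b (by simp; omega)).2
    have peel : ∀ {a' b' : ℕ} (e : ℕ), b' - a' = k → a ≤ a' → b' ≤ b →
        e ∉ Ioc a' b' → insert e (Ioc a' b') = Ioc a b → q e = c →
        L * ∑ n ∈ Ioc a b, z n + (U - L) * m ≤ ∑ n ∈ Ioc a b, z n * q n := by
      intro a' b' e hk' ha' hb' he hins hqe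
      have hsub : Ioc a' b' ⊆ Ioc a b := Ioc_subset_Ioc ha' hb'
      have hrest := ih (fun u v huv => hm u v (huv.trans hsub)) hcU
        (fun n hn => ⟨hc n (hsub hn), (hq n (hsub hn)).2⟩)
        (hinc.mono (by omega) le_rfl) (hdec.mono le_rfl hb') hk'
      have hZ := hm a b subset_rfl
      rw [← hins, sum_insert he] at hZ ⊢
      rw [sum_insert he, hqe]
      nlinarith
    rcases le_total (q (a + 1)) (q b) with hleft | hright
    · exact peel (a + 1) (by omega) (by omega) le_rfl (by simp)
        (insert_Ioc_add_one_left_eq_Ioc (by omega)) (min_eq_left hleft).symm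
    · refine peel (a' := a) (b' := b - 1) b (by omega) le_rfl (by omega) (by simp; omega) ?_
        (min_eq_right hright).symm
      ext n
      simp only [mem_insert, mem_Ioc]
      omega

theorem exists_Ioc_sum_le_Ioc_sum (z : ℕ → ℝ) (N : ℕ) :
    ∃ τ1 τ2, τ1 ≤ τ2 ∧ τ2 ≤ N ∧
      ∀ u v, Ioc u v ⊆ Ioc 0 N → ∑ n ∈ Ioc τ1 τ2, z n ≤ ∑ n ∈ Ioc u v, z n := by
  let F := (range (N + 1) ×ˢ range (N + 1)).filter fun t => t.1 ≤ t.2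
  obtain ⟨⟨τ1, τ2⟩, hτ, hmin⟩ :=
    F.exists_min_image (fun t => ∑ n ∈ Ioc t.1 t.2, z n) ⟨(0, 0), by simp [F]⟩
  simp only [F, mem_filter, mem_product, mem_range] at hτ
  refine ⟨τ1, τ2, hτ.2, by omega, fun u v huv => ?_⟩
  rcases lt_or_ge u v with huv' | hvu
  · have hv := mem_Ioc.1 (huv (right_mem_Ioc.2 huv'))
    exact hmin (u, v) (by simp only [F, mem_filter, mem_product, mem_range]; omega)
  · simpa [Ioc_eq_empty_of_le hvu] using hmin (0, 0) (by simp [F])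

theorem linLoss_eq_sum_Ioc (z q : ℕ → ℝ) (N : ℕ) :
    linLoss z q N = ∑ n ∈ Ioc 0 N, z n * q n := by
  rw [linLoss, ← Icc_add_one_left_eq_Ioc, zero_add]

theorem linLoss_rectSeq (z : ℕ → ℝ) (Q0 Q1 : ℝ) {N τ1 τ2 : ℕ} (h2N : τ2 ≤ N) :
    linLoss z (rectSeq Q0 Q1 τ1 τ2) N =
      Q0 * ∑ n ∈ Ioc 0 N, z n + (Q1 - Q0) * ∑ n ∈ Ioc τ1 τ2, z n := by
  have hsub : Ioc τ1 τ2 ⊆ Ioc 0 N := by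
    intro n; simp only [mem_Ioc]; omega
  have hrect : ∀ n, rectSeq Q0 Q1 τ1 τ2 n = Q0 + if n ∈ Ioc τ1 τ2 then Q1 - Q0 else 0 := by
    intro n
    simp only [rectSeq, mem_Ioc]
    split_ifs <;> first | ring1 | omega
  simp only [linLoss_eq_sum_Ioc, hrect, mul_add, mul_ite, mul_zero, sum_add_distrib, ← sum_mul,
    sum_ite_mem, inter_eq_right.2 hsub]
  ring

theorem feasible_rectSeq {Q0 Q1 : ℝ} (hQ : Q0 ≤ Q1) (N τ1 τ2 : ℕ) :
    Feasible Q0 Q1 N (rectSeq Q0 Q1 τ1 τ2) := by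
  intro n _ _
  simp only [rectSeq]
  split_ifs <;> simp [hQ]

theorem unimodalOn_rectSeq {Q0 Q1 : ℝ} (hQ : Q0 ≤ Q1) {N τ1 τ2 : ℕ} (hN : 1 ≤ N)
    (h2N : τ2 ≤ N) : UnimodalOn N (rectSeq Q0 Q1 τ1 τ2) := by
  refine ⟨max 1 τ2, le_max_left _ _, max_le hN h2N, ?_, ?_⟩ <;>
  · intro i j _ _ _
    simp only [rectSeq]
    split_ifs <;> first | exact le_rfl | exact hQ | omega

/-- there exist thresholds `0 ≤ τ1 ≤ τ2 ≤ N` such that the corresponding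
rectangular sequence is feasible, unimodal, and minimizes the linear loss over all
feasible unimodal sequences. -/
theorem stmt5 (N : ℕ) (hN : 1 ≤ N) (z : ℕ → ℝ) (Q0 Q1 : ℝ) (hQ : Q0 ≤ Q1) :
    ∃ τ1 τ2 : ℕ, τ1 ≤ τ2 ∧ τ2 ≤ N ∧
      Feasible Q0 Q1 N (rectSeq Q0 Q1 τ1 τ2) ∧
      UnimodalOn N (rectSeq Q0 Q1 τ1 τ2) ∧
      ∀ q : ℕ → ℝ, Feasible Q0 Q1 N q → UnimodalOn N q →
        linLoss z (rectSeq Q0 Q1 τ1 τ2) N ≤ linLoss z q N := by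
  obtain ⟨τ1, τ2, h12, h2N, hmin⟩ := exists_Ioc_sum_le_Ioc_sum z N
  refine ⟨τ1, τ2, h12, h2N, feasible_rectSeq hQ N τ1 τ2, unimodalOn_rectSeq hQ hN h2N, ?_⟩
  rintro q hq ⟨p, -, -, hinc, hdec⟩
  rw [linLoss_rectSeq z Q0 Q1 h2N, linLoss_eq_sum_Ioc]
  exact add_mul_le_sum_Ioc_mul_of_unimodal hmin hQ
    (fun n hn => hq n (mem_Ioc.1 hn).1 (mem_Ioc.1 hn).2) hinc hdec
end
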